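/- Let φ: ℝ^M × ℝ → ℝ be C², and suppose m^FWI: ℝ → ℝ^M is differentiable and satisfies ∇_m φ(m^FWI(α), α) = 0 for all α. Let ψ(α) = ½‖m' - m^FWI(α)‖² for fixed m' ∈ ℝ^M. If the Hessian H(α) = ∇²_m φ(m^FWI(α), α) is invertible and symmetric, then ψ'(α) = ⟨∂_α ∇_m φ(m^FWI(α), α), ρ(α)⟩, where ρ(α) is the unique solution of H(α) ρ(α) = m' - m^FWI(α). -/

import Mathlib

open Matrix

/-!
Differentiating the stationarity condition `G (mF a) a = 0` gives `H mF' = -gα`. The chain rule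
gives `ψ'(α) = -⟨m' - mF α, mF'⟩ = -⟨H ρ, mF'⟩`, and symmetry of `H` moves it across:
`-⟨ρ, H mF'⟩ = ⟨ρ, gα⟩`. Thus `ρ` is an adjoint state: one linear solve replaces computing `mF'`.
-/

theorem HasFDerivAt.apply_deriv_eq_zero_of_forall_eq_zero
    {E F : Type*} [NormedAddCommGroup E] [NormedSpace ℝ E]
    [NormedAddCommGroup F] [NormedSpace ℝ F]
    {G : E → ℝ → F} {x : ℝ → E} {x' : E} {α : ℝ} {L : E × ℝ →L[ℝ] F}
    (hG : HasFDerivAt (fun q : E × ℝ => G q.1 q.2) L (x α, α))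
    (hx : HasDerivAt x x' α) (hstat : ∀ a, G (x a) a = 0) :
    L (x', 1) = 0 := by
  have hcomp : HasDerivAt (fun a => G (x a) a) (L (x', 1)) α :=
    hG.comp_hasDerivAt_of_eq α (hx.prodMk (hasDerivAt_id α)) rfl
  simp only [hstat] at hcomp
  exact hcomp.unique (hasDerivAt_const α 0)

theorem hasDerivAt_half_sum_sq_sub {ι : Type*} [Fintype ι] (m' : ι → ℝ) {x : ℝ → ι → ℝ}
    {x' : ι → ℝ} {α : ℝ} (hx : HasDerivAt x x' α) :
    HasDerivAt (fun a => (1 / 2 : ℝ) * ∑ i, (m' i - x a i) ^ 2) (-((m' - x α) ⬝ᵥ x')) α := by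
  have hsum : HasDerivAt (fun a => ∑ i, (m' i - x a i) ^ 2)
      (∑ i, 2 * (m' i - x α i) ^ 1 * (0 - x' i)) α :=
    HasDerivAt.fun_sum fun i _ =>
      ((hasDerivAt_const α (m' i)).sub (hasDerivAt_pi.1 hx i)).fun_pow 2
  refine (hsum.const_mul (1 / 2 : ℝ)).congr_deriv ?_
  simp only [dotProduct, Pi.sub_apply, Finset.mul_sum, ← Finset.sum_neg_distrib]
  exact Finset.sum_congr rfl fun i _ => by ring

theorem Matrix.IsSymm.mulVec_dotProduct {n R : Type*} [Fintype n] [CommSemiring R]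
    {H : Matrix n n R} (hH : H.IsSymm) (v w : n → R) :
    H *ᵥ v ⬝ᵥ w = v ⬝ᵥ H *ᵥ w := by
  rw [dotProduct_mulVec, ← mulVec_transpose, hH.eq, dotProduct_comm]

theorem stmt_5_general (M : ℕ) (m' : Fin M → ℝ)
    (G : (Fin M → ℝ) → ℝ → (Fin M → ℝ))
    (mF : ℝ → (Fin M → ℝ)) (mF' : Fin M → ℝ) (α : ℝ)
    (H : Matrix (Fin M) (Fin M) ℝ) (gα ρ : Fin M → ℝ)
    (L : ((Fin M → ℝ) × ℝ) →L[ℝ] (Fin M → ℝ))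
    (hL : ∀ v : (Fin M → ℝ) × ℝ, L v = H.mulVec v.1 + v.2 • gα)
    (hstat : ∀ a : ℝ, G (mF a) a = 0)
    (hmF : HasDerivAt mF mF' α)
    (hG : HasFDerivAt (fun q : (Fin M → ℝ) × ℝ => G q.1 q.2) L (mF α, α))
    (hHsym : H.IsSymm)
    (hρ : H.mulVec ρ = m' - mF α) :
    HasDerivAt (fun a => (1 / 2 : ℝ) * ∑ i, (m' i - mF a i) ^ 2) (gα ⬝ᵥ ρ) α := by
  have hsens : H *ᵥ mF' = -gα := by
    have h := hG.apply_deriv_eq_zero_of_forall_eq_zero hmF hstat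
    rwa [hL, one_smul, add_eq_zero_iff_eq_neg] at h
  have hadj : -((m' - mF α) ⬝ᵥ mF') = gα ⬝ᵥ ρ := by
    rw [← hρ, hHsym.mulVec_dotProduct, hsens, dotProduct_neg, neg_neg, dotProduct_comm]
  exact hadj ▸ hasDerivAt_half_sum_sq_sub m' hmF

/-- Abstract adjoint-state formula for the derivative of the upper-level objective:
if `G(m^FWI(a), a) = 0` for all `a` (stationarity of the lower-level gradient `G = ∇_m φ`),
`G` is differentiable at the point with derivative `(v, t) ↦ H v + t gα` (so `H` is the
Hessian and `gα = ∂_α ∇_m φ`), `H` is symmetric and invertible, and `H ρ = m' - m^FWI(α)`,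
then `ψ(a) = ½‖m' - m^FWI(a)‖²` satisfies `ψ'(α) = ⟨gα, ρ⟩`. -/
theorem stmt_5 (M : ℕ) (m' : Fin M → ℝ)
    (G : (Fin M → ℝ) → ℝ → (Fin M → ℝ))
    (mF : ℝ → (Fin M → ℝ)) (mF' : Fin M → ℝ) (α : ℝ)
    (H : Matrix (Fin M) (Fin M) ℝ) (gα ρ : Fin M → ℝ)
    (L : ((Fin M → ℝ) × ℝ) →L[ℝ] (Fin M → ℝ))
    (hL : ∀ v : (Fin M → ℝ) × ℝ, L v = H.mulVec v.1 + v.2 • gα)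
    (hstat : ∀ a : ℝ, G (mF a) a = 0)
    (hmF : HasDerivAt mF mF' α)
    (hG : HasFDerivAt (fun q : (Fin M → ℝ) × ℝ => G q.1 q.2) L (mF α, α))
    (hHsym : H.IsSymm) (hHinv : IsUnit H.det)
    (hρ : H.mulVec ρ = m' - mF α) :
    HasDerivAt (fun a => (1 / 2 : ℝ) * ∑ i, (m' i - mF a i) ^ 2) (gα ⬝ᵥ ρ) α :=
  stmt_5_general M m' G mF mF' α H gα ρ L hL hstat hmF hG hHsym hρ
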